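/- arXiv:2403.12492 — 5 statements merged into one kernel-verified Lean document; each statement's English description precedes it below -/
import Mathlib

section
/- (Diamond lemma, Matveev's version) Let Γ be a directed graph with the finite path property. Suppose there is a function μ assigning a natural number to every pair of distinct edges (v₀→v₁, v₀→v₂) with common beginning and distinct ends, such that: (MF1) if μ(v₀→v₁, v₀→v₂) = 0 then there exist oriented paths from v₁ and from v₂ ending at the same vertex; (MF2) if μ(v₀→v₁, v₀→v₂) > 0 then there exists an edge v₀→v₃ with μ(v₀→v₁, v₀→v₃) < μ(v₀→v₁, v₀→v₂) and μ(v₀→v₂, v₀→v₃) < μ(v₀→v₁, v₀→v₂). Then every vertex of Γ has exactly one root. -/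
/-- The Diamond lemma (Matveev's version): a directed graph with the finite path
property admitting a mediator function satisfying (MF1) and (MF2) has the property
that every vertex has exactly one root. -/
theorem diamond_lemma {V : Type*} (E : V → V → Prop) (μ : V → V → V → ℕ)
    (hFP : ¬ ∃ f : ℕ → V, ∀ n, E (f n) (f (n + 1)))
    (hsymm : ∀ v₀ v₁ v₂, μ v₀ v₁ v₂ = μ v₀ v₂ v₁)
    (hMF1 : ∀ v₀ v₁ v₂, E v₀ v₁ → E v₀ v₂ → v₁ ≠ v₂ → μ v₀ v₁ v₂ = 0 →
      ∃ v₃, Relation.ReflTransGen E v₁ v₃ ∧ Relation.ReflTransGen E v₂ v₃)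
    (hMF2 : ∀ v₀ v₁ v₂, E v₀ v₁ → E v₀ v₂ → v₁ ≠ v₂ → 0 < μ v₀ v₁ v₂ →
      ∃ v₃, E v₀ v₃ ∧ μ v₀ v₁ v₃ < μ v₀ v₁ v₂ ∧ μ v₀ v₂ v₃ < μ v₀ v₁ v₂) :
    ∀ v : V, ∃! w : V, Relation.ReflTransGen E v w ∧ ∀ u, ¬ E w u := by
  classical
  -- Well-foundedness of the reversed edge relation
  have wf : WellFounded (fun a b : V => E b a) := by
    by_contra hwf
    apply hFP
    have hne : ∃ x : V, ¬ Acc (fun a b : V => E b a) x := by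
      by_contra h
      push_neg at h
      exact hwf ⟨h⟩
    have step : ∀ x : V, ¬ Acc (fun a b : V => E b a) x →
        ∃ y, E x y ∧ ¬ Acc (fun a b : V => E b a) y := by
      intro x hx
      by_contra h
      push_neg at h
      exact hx (Acc.intro x fun y hy => h y hy)
    obtain ⟨x₀, hx₀⟩ := hne
    have step' : ∀ s : {x : V // ¬ Acc (fun a b : V => E b a) x},
        ∃ t : {x : V // ¬ Acc (fun a b : V => E b a) x}, E s.1 t.1 := by
      intro s
      obtain ⟨y, hy1, hy2⟩ := step s.1 s.2
      exact ⟨⟨y, hy2⟩, hy1⟩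
    choose nxt hnxt using step'
    refine ⟨fun n => (nxt^[n] ⟨x₀, hx₀⟩).1, fun n => ?_⟩
    have h : nxt^[n+1] ⟨x₀, hx₀⟩ = nxt (nxt^[n] ⟨x₀, hx₀⟩) :=
      Function.iterate_succ_apply' nxt n _
    show E (nxt^[n] ⟨x₀, hx₀⟩).1 (nxt^[n+1] ⟨x₀, hx₀⟩).1
    rw [h]
    exact hnxt _
  -- Confluence, by well-founded induction (Newman's lemma, with local
  -- confluence established by induction on the mediator value)
  have main : ∀ v a b : V, Relation.ReflTransGen E v a → Relation.ReflTransGen E v b →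
      ∃ c, Relation.ReflTransGen E a c ∧ Relation.ReflTransGen E b c := by
    intro v
    refine wf.induction (C := fun v => ∀ a b : V,
      Relation.ReflTransGen E v a → Relation.ReflTransGen E v b →
      ∃ c, Relation.ReflTransGen E a c ∧ Relation.ReflTransGen E b c) v ?_
    intro v IH a b hva hvb
    rcases hva.cases_head with rfl | ⟨a₁, hva₁, ha₁a⟩
    · exact ⟨b, hvb, Relation.ReflTransGen.refl⟩
    rcases hvb.cases_head with rfl | ⟨b₁, hvb₁, hb₁b⟩
    · exact ⟨a, Relation.ReflTransGen.refl, hva⟩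
    -- local confluence at v
    have lconf : ∀ n x y, E v x → E v y → x ≠ y → μ v x y = n →
        ∃ w, Relation.ReflTransGen E x w ∧ Relation.ReflTransGen E y w := by
      intro n
      induction n using Nat.strong_induction_on with
      | _ n ihn =>
        intro x y hx hy hxy hμ
        rcases Nat.eq_zero_or_pos n with rfl | hpos
        · exact hMF1 v x y hx hy hxy hμ
        · obtain ⟨z, hz, hlt1, hlt2⟩ := hMF2 v x y hx hy hxy (hμ ▸ hpos)
          rw [hμ] at hlt1 hlt2
          have jxz : ∃ w, Relation.ReflTransGen E x w ∧ Relation.ReflTransGen E z w := by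
            by_cases h : x = z
            · exact ⟨x, Relation.ReflTransGen.refl, h ▸ Relation.ReflTransGen.refl⟩
            · exact ihn (μ v x z) hlt1 x z hx hz h rfl
          have jyz : ∃ w, Relation.ReflTransGen E y w ∧ Relation.ReflTransGen E z w := by
            by_cases h : y = z
            · exact ⟨y, Relation.ReflTransGen.refl, h ▸ Relation.ReflTransGen.refl⟩
            · exact ihn (μ v y z) hlt2 y z hy hz h rfl
          obtain ⟨w₁, hxw₁, hzw₁⟩ := jxz
          obtain ⟨w₂, hyw₂, hzw₂⟩ := jyz
          obtain ⟨c, hw₁c, hw₂c⟩ := IH z hz w₁ w₂ hzw₁ hzw₂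
          exact ⟨c, hxw₁.trans hw₁c, hyw₂.trans hw₂c⟩
    by_cases hab : a₁ = b₁
    · subst hab
      exact IH a₁ hva₁ a b ha₁a hb₁b
    · obtain ⟨w, ha₁w, hb₁w⟩ := lconf (μ v a₁ b₁) a₁ b₁ hva₁ hvb₁ hab rfl
      obtain ⟨d, had, hwd⟩ := IH a₁ hva₁ a w ha₁a ha₁w
      obtain ⟨e, hbe, hde⟩ := IH b₁ hvb₁ b d hb₁b (hb₁w.trans hwd)
      exact ⟨e, had.trans hde, hbe⟩
  -- Existence of a root
  have exroot : ∀ v : V, ∃ w, Relation.ReflTransGen E v w ∧ ∀ u, ¬ E w u := by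
    intro v
    refine wf.induction (C := fun v => ∃ w, Relation.ReflTransGen E v w ∧ ∀ u, ¬ E w u) v ?_
    intro v IH
    by_cases h : ∃ u, E v u
    · obtain ⟨u, hu⟩ := h
      obtain ⟨w, hw1, hw2⟩ := IH u hu
      exact ⟨w, (Relation.ReflTransGen.single hu).trans hw1, hw2⟩
    · push_neg at h
      exact ⟨v, Relation.ReflTransGen.refl, h⟩
  intro v
  obtain ⟨w, hw, hsink⟩ := exroot v
  refine ⟨w, ⟨hw, hsink⟩, ?_⟩
  rintro w' ⟨hw', hsink'⟩
  obtain ⟨c, h1, h2⟩ := main v w' w hw' hw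
  rcases h1.cases_head with rfl | ⟨u, hu, _⟩
  · rcases h2.cases_head with h | ⟨u, hu, _⟩
    · exact h.symm
    · exact absurd hu (hsink u)
  · exact absurd hu (hsink' u)
end

section
/- If a relation on a set has no infinite descending chains and is locally confluent (any two one-step reducts of an element have a common reduct under the reflexive-transitive closure), then every element reduces to a unique normal form (Newman's lemma, uniqueness form): each element is related by the reflexive-transitive closure to exactly one element admitting no further reduction. -/
/-! Reduction along the converse of `r` is well-founded, so every element reaches an element
with no successor, and by well-founded induction local confluence upgrades to confluence
(Newman's lemma). Two normal forms of the same element are then joinable, and a normal form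
only reduces to itself, so they coincide. -/

open Relation

section

variable {α : Type*} {r : α → α → Prop}

theorem wellFounded_flip_of_not_exists_chain (h : ¬ ∃ f : ℕ → α, ∀ n, r (f n) (f (n + 1))) :
    WellFounded (flip r) :=
  wellFounded_iff_isEmpty_descending_chain.2 ⟨fun ⟨f, hf⟩ => h ⟨f, hf⟩⟩

namespace Relation.ReflTransGen

theorem eq_of_forall_not_rel {a b : α} (hab : ReflTransGen r a b) (ha : ∀ c, ¬ r a c) :
    a = b := by
  rcases hab.cases_head with rfl | ⟨c, hac, -⟩
  · rfl
  · exact absurd hac (ha c)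

end Relation.ReflTransGen

theorem exists_reflTransGen_forall_not_rel (hwf : WellFounded (flip r)) (a : α) :
    ∃ n, ReflTransGen r a n ∧ ∀ m, ¬ r n m := by
  induction a using hwf.induction with
  | _ a ih =>
    by_cases h : ∃ b, r a b
    · obtain ⟨b, hab⟩ := h
      obtain ⟨n, hbn, hn⟩ := ih b hab
      exact ⟨n, .head hab hbn, hn⟩
    · exact ⟨a, .refl, fun m hm => h ⟨m, hm⟩⟩

theorem join_reflTransGen_of_locallyConfluent (hwf : WellFounded (flip r))
    (hlc : ∀ a b c, r a b → r a c → Join (ReflTransGen r) b c) {a b c : α}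
    (hab : ReflTransGen r a b) (hac : ReflTransGen r a c) : Join (ReflTransGen r) b c := by
  induction a using hwf.induction generalizing b c with
  | _ a ih =>
    rcases hab.cases_head with rfl | ⟨a₁, ha₁, h₁b⟩
    · exact ⟨c, hac, .refl⟩
    rcases hac.cases_head with rfl | ⟨a₂, ha₂, h₂c⟩
    · exact ⟨b, .refl, hab⟩
    obtain ⟨d, h₁d, h₂d⟩ := hlc a a₁ a₂ ha₁ ha₂
    obtain ⟨e, hbe, hde⟩ := ih a₁ ha₁ h₁b h₁d
    obtain ⟨f, hef, hcf⟩ := ih a₂ ha₂ (h₂d.trans hde) h₂c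
    exact ⟨f, hbe.trans hef, hcf⟩

end

/-- Newman's lemma, uniqueness form: if the converse of `r` is well-founded and `r`
is locally confluent, then every element has a unique normal form. -/
theorem newman_unique_normal_form {α : Type*} (r : α → α → Prop)
    (hwf : ¬ ∃ f : ℕ → α, ∀ n, r (f n) (f (n + 1)))
    (hlc : ∀ a b c, r a b → r a c →
      ∃ d, Relation.ReflTransGen r b d ∧ Relation.ReflTransGen r c d) :
    ∀ a : α, ∃! n : α, Relation.ReflTransGen r a n ∧ ∀ m, ¬ r n m := by
  have wf := wellFounded_flip_of_not_exists_chain hwf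
  intro a
  obtain ⟨n, han, hn⟩ := exists_reflTransGen_forall_not_rel wf a
  refine ⟨n, ⟨han, hn⟩, fun m ⟨ham, hm⟩ => ?_⟩
  obtain ⟨d, hmd, hnd⟩ := join_reflTransGen_of_locallyConfluent wf hlc ham han
  exact (hmd.eq_of_forall_not_rel hm).trans (hnd.eq_of_forall_not_rel hn).symm
end

section
/- In a directed graph with the finite path property, if for every vertex v and every pair of edges v→v₁, v→v₂ with v₁ ≠ v₂ there exist oriented paths from v₁ and from v₂ ending at a common vertex, then every vertex has a unique root. -/
/-- In a directed graph with the finite path property, if any two distinct one-step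
successors of a vertex can be joined by oriented paths to a common vertex, then
every vertex has a unique root. -/
theorem unique_root_of_local_joinability {V : Type*} (E : V → V → Prop)
    (hFP : ¬ ∃ f : ℕ → V, ∀ n, E (f n) (f (n + 1)))
    (hjoin : ∀ v v₁ v₂, E v v₁ → E v v₂ → v₁ ≠ v₂ →
      ∃ w, Relation.ReflTransGen E v₁ w ∧ Relation.ReflTransGen E v₂ w) :
    ∀ v : V, ∃! w : V, Relation.ReflTransGen E v w ∧ ∀ u, ¬ E w u := by
  classical
  -- well-foundedness of the converse relation
  have hwf : WellFounded (fun a b : V => E b a) := by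
    constructor
    intro x
    by_contra hx
    have step : ∀ p : {x : V // ¬ Acc (fun a b : V => E b a) x},
        ∃ q : {x : V // ¬ Acc (fun a b : V => E b a) x}, E p.1 q.1 := by
      rintro ⟨x, hx⟩
      by_contra hc
      apply hx
      constructor
      intro y hy
      by_contra hy'
      exact hc ⟨⟨y, hy'⟩, hy⟩
    choose g hg using step
    set f : ℕ → {x : V // ¬ Acc (fun a b : V => E b a) x} :=
      fun n => g^[n] ⟨x, hx⟩ with hf
    apply hFP
    refine ⟨fun n => (f n).1, fun n => ?_⟩
    have h1 : f (n + 1) = g (f n) := Function.iterate_succ_apply' g n _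
    show E (f n).1 (f (n+1)).1
    rw [h1]
    exact hg (f n)
  -- confluence (Newman's lemma)
  have conf : ∀ v a b : V, Relation.ReflTransGen E v a → Relation.ReflTransGen E v b →
      ∃ c, Relation.ReflTransGen E a c ∧ Relation.ReflTransGen E b c := by
    intro v
    induction v using hwf.induction with
    | _ v ih =>
      intro a b hva hvb
      rcases hva.cases_head with rfl | ⟨a₁, hva₁, ha₁a⟩
      · exact ⟨b, hvb, Relation.ReflTransGen.refl⟩
      rcases hvb.cases_head with rfl | ⟨b₁, hvb₁, hb₁b⟩
      · exact ⟨a, Relation.ReflTransGen.refl,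
          Relation.ReflTransGen.head hva₁ ha₁a⟩
      by_cases hab : a₁ = b₁
      · subst hab
        exact ih a₁ hva₁ a b ha₁a hb₁b
      · obtain ⟨w, hw₁, hw₂⟩ := hjoin v a₁ b₁ hva₁ hvb₁ hab
        obtain ⟨d, had, hwd⟩ := ih a₁ hva₁ a w ha₁a hw₁
        obtain ⟨e, hbe, hde⟩ := ih b₁ hvb₁ b d hb₁b (hw₂.trans hwd)
        exact ⟨e, had.trans hde, hbe⟩
  intro v
  -- existence of a normal form
  have exist : ∀ v : V, ∃ w, Relation.ReflTransGen E v w ∧ ∀ u, ¬ E w u := by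
    intro v
    induction v using hwf.induction with
    | _ v ih =>
      by_cases hs : ∀ u, ¬ E v u
      · exact ⟨v, Relation.ReflTransGen.refl, hs⟩
      · push_neg at hs
        obtain ⟨u, hu⟩ := hs
        obtain ⟨w, huw, hw⟩ := ih u hu
        exact ⟨w, Relation.ReflTransGen.head hu huw, hw⟩
  obtain ⟨w, hvw, hw⟩ := exist v
  refine ⟨w, ⟨hvw, hw⟩, ?_⟩
  rintro w' ⟨hvw', hw'⟩
  obtain ⟨c, hwc, hw'c⟩ := conf v w' w hvw' hvw
  rcases hwc.cases_head with rfl | ⟨x, hx, -⟩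
  · rcases hw'c.cases_head with h | ⟨y, hy, -⟩
    · exact h.symm
    · exact absurd hy (hw y)
  · exact absurd hx (hw' x)
end

section
/- Let Γ be a directed graph satisfying the finite path property. If a vertex v has two distinct roots, then there exist a vertex v₀ reachable from v and two distinct edges v₀→v₁, v₀→v₂ such that v₁ and v₂ have no common vertex reachable from both. -/
open Relation

private lemma wf_of_no_chain {V : Type*} (E : V → V → Prop)
    (hFP : ¬ ∃ f : ℕ → V, ∀ n, E (f n) (f (n + 1))) :
    WellFounded (flip E) := by
  by_contra h
  have : ∃ a, ¬ Acc (flip E) a := by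
    by_contra h'
    push_neg at h'
    exact h ⟨h'⟩
  obtain ⟨a, ha⟩ := this
  have step : ∀ x : {x : V // ¬ Acc (flip E) x}, ∃ y : {x : V // ¬ Acc (flip E) x}, E x.1 y.1 := by
    rintro ⟨x, hx⟩
    by_contra hy
    push_neg at hy
    exact hx (Acc.intro x (fun y hyx => by
      by_contra hacc
      exact hy ⟨y, hacc⟩ hyx))
  choose g hg using step
  refine hFP ⟨fun n => (g^[n] ⟨a, ha⟩).1, fun n => ?_⟩
  show E _ (g^[n+1] ⟨a, ha⟩).1
  rw [Function.iterate_succ_apply']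
  exact hg _

private lemma exists_root {V : Type*} (E : V → V → Prop)
    (hFP : ¬ ∃ f : ℕ → V, ∀ n, E (f n) (f (n + 1))) (x : V) :
    ∃ r, Relation.ReflTransGen E x r ∧ ∀ u, ¬ E r u := by
  induction x using (wf_of_no_chain E hFP).induction with
  | _ x ih =>
    by_cases hx : ∃ y, E x y
    · obtain ⟨y, hy⟩ := hx
      obtain ⟨r, hr1, hr2⟩ := ih y hy
      exact ⟨r, ReflTransGen.head hy hr1, hr2⟩
    · push_neg at hx
      exact ⟨x, ReflTransGen.refl, hx⟩

/-- If a vertex of a directed graph with the finite path property has two distinct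
roots, then some vertex reachable from it has two distinct one-step successors that
are not joinable. -/
theorem non_joinable_divergence_of_two_roots {V : Type*} (E : V → V → Prop)
    (hFP : ¬ ∃ f : ℕ → V, ∀ n, E (f n) (f (n + 1)))
    (v r₁ r₂ : V) (hne : r₁ ≠ r₂)
    (h₁ : Relation.ReflTransGen E v r₁ ∧ ∀ u, ¬ E r₁ u)
    (h₂ : Relation.ReflTransGen E v r₂ ∧ ∀ u, ¬ E r₂ u) :
    ∃ v₀ v₁ v₂ : V, Relation.ReflTransGen E v v₀ ∧ E v₀ v₁ ∧ E v₀ v₂ ∧ v₁ ≠ v₂ ∧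
      ¬ ∃ w, Relation.ReflTransGen E v₁ w ∧ Relation.ReflTransGen E v₂ w := by
  induction v using (wf_of_no_chain E hFP).induction generalizing r₁ r₂ with
  | _ v ih =>
  obtain ⟨hp₁, hs₁⟩ := h₁
  obtain ⟨hp₂, hs₂⟩ := h₂
  rcases hp₁.cases_head with rfl | ⟨a₁, ha₁, hp₁'⟩
  · rcases hp₂.cases_head with rfl | ⟨a, ha, _⟩
    · exact absurd rfl hne
    · exact absurd ha (hs₁ a)
  rcases hp₂.cases_head with rfl | ⟨a₂, ha₂, hp₂'⟩
  · exact absurd ha₁ (hs₂ a₁)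
  by_cases hjoin : ∃ w, Relation.ReflTransGen E a₁ w ∧ Relation.ReflTransGen E a₂ w
  · obtain ⟨w, hw₁, hw₂⟩ := hjoin
    obtain ⟨r, hr, hrs⟩ := exists_root E hFP w
    -- r is a root of both a₁ and a₂
    have key : ∀ b rb, E v b → Relation.ReflTransGen E b rb → (∀ u, ¬ E rb u) →
        Relation.ReflTransGen E b r → rb ≠ r →
        ∃ v₀ v₁ v₂ : V, Relation.ReflTransGen E v v₀ ∧ E v₀ v₁ ∧ E v₀ v₂ ∧ v₁ ≠ v₂ ∧
          ¬ ∃ w, Relation.ReflTransGen E v₁ w ∧ Relation.ReflTransGen E v₂ w := by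
      intro b rb hvb hbrb hrbs hbr hne'
      obtain ⟨v₀, v₁', v₂', h0, h1, h2, h3, h4⟩ :=
        ih b hvb rb r hne' ⟨hbrb, hrbs⟩ ⟨hbr, hrs⟩
      exact ⟨v₀, v₁', v₂', ReflTransGen.head hvb h0, h1, h2, h3, h4⟩
    by_cases h : r₁ = r
    · exact key a₂ r₂ ha₂ hp₂' hs₂ (hw₂.trans hr) (fun e => hne (h.trans e.symm))
    · exact key a₁ r₁ ha₁ hp₁' hs₁ (hw₁.trans hr) h
  · refine ⟨v, a₁, a₂, ReflTransGen.refl, ha₁, ha₂, ?_, hjoin⟩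
    rintro rfl
    exact hjoin ⟨a₁, ReflTransGen.refl, ReflTransGen.refl⟩
end

section
/- Let r be a relation on α whose converse is well-founded, and let μ : {pairs (b,c) with r a b, r a c, b ≠ c} → ℕ satisfy: μ = 0 implies b and c are joinable (have a common r*-successor), and μ > 0 implies there is d with r a d and the μ-values of (b,d) and (c,d) are strictly smaller than μ(b,c). Then any two one-step successors of a common element are joinable; consequently r is locally confluent and, by Newman's lemma, confluent. -/
/-- A mediator function forces local confluence, and hence (with converse
well-foundedness, by Newman's lemma) confluence of the reflexive-transitive
closure. -/
theorem mediator_implies_confluence {α : Type*} (r : α → α → Prop) (μ : α → α → α → ℕ)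
    (hwf : ¬ ∃ f : ℕ → α, ∀ n, r (f n) (f (n + 1)))
    (hsymm : ∀ a b c, μ a b c = μ a c b)
    (h0 : ∀ a b c, r a b → r a c → b ≠ c → μ a b c = 0 →
      ∃ d, Relation.ReflTransGen r b d ∧ Relation.ReflTransGen r c d)
    (hpos : ∀ a b c, r a b → r a c → b ≠ c → 0 < μ a b c →
      ∃ d, r a d ∧ μ a b d < μ a b c ∧ μ a c d < μ a b c) :
    (∀ a b c, r a b → r a c →
      ∃ d, Relation.ReflTransGen r b d ∧ Relation.ReflTransGen r c d) ∧
    (∀ a b c, Relation.ReflTransGen r a b → Relation.ReflTransGen r a c →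
      ∃ d, Relation.ReflTransGen r b d ∧ Relation.ReflTransGen r c d) := by
  classical
  -- converse well-foundedness
  have wf : WellFounded (fun x y => r y x) := by
    by_contra hnwf
    have hx : ∃ x, ¬ Acc (fun x y => r y x) x := by
      by_contra h
      push_neg at h
      exact hnwf ⟨h⟩
    have step : ∀ y, ¬ Acc (fun x y => r y x) y →
        ∃ z, r y z ∧ ¬ Acc (fun x y => r y x) z := by
      intro y hy
      by_contra h
      push_neg at h
      exact hy (Acc.intro y fun z hz => h z hz)
    obtain ⟨x0, hx0⟩ := hx
    let f : ℕ → {x : α // ¬ Acc (fun x y => r y x) x} := fun n =>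
      Nat.rec ⟨x0, hx0⟩ (fun _ p => ⟨(step p.1 p.2).choose, (step p.1 p.2).choose_spec.2⟩) n
    exact hwf ⟨fun n => (f n).1, fun n => (step (f n).1 (f n).2).choose_spec.1⟩
  -- main confluence statement, by well-founded induction (Newman)
  have main : ∀ a b c, Relation.ReflTransGen r a b → Relation.ReflTransGen r a c →
      ∃ d, Relation.ReflTransGen r b d ∧ Relation.ReflTransGen r c d := by
    intro a
    induction a using wf.induction with
    | _ a IH =>
    -- local joinability of one-step successors, by induction on μ
    have loc : ∀ n b c, r a b → r a c → μ a b c = n →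
        ∃ d, Relation.ReflTransGen r b d ∧ Relation.ReflTransGen r c d := by
      intro n
      induction n using Nat.strong_induction_on with
      | _ n IHn =>
      intro b c hb hc hμ
      by_cases hbc : b = c
      · exact ⟨c, hbc ▸ Relation.ReflTransGen.refl, Relation.ReflTransGen.refl⟩
      rcases Nat.eq_zero_or_pos n with hz | hp
      · exact h0 a b c hb hc hbc (hμ.trans hz)
      · obtain ⟨d, hd, h1, h2⟩ := hpos a b c hb hc hbc (hμ ▸ hp)
        have jbd : ∃ e, Relation.ReflTransGen r b e ∧ Relation.ReflTransGen r d e := by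
          by_cases h' : b = d
          · exact ⟨d, h' ▸ Relation.ReflTransGen.refl, Relation.ReflTransGen.refl⟩
          · exact IHn (μ a b d) (hμ ▸ h1) b d hb hd rfl
        have jcd : ∃ e, Relation.ReflTransGen r c e ∧ Relation.ReflTransGen r d e := by
          by_cases h' : c = d
          · exact ⟨d, h' ▸ Relation.ReflTransGen.refl, Relation.ReflTransGen.refl⟩
          · exact IHn (μ a c d) (hμ ▸ h2) c d hc hd rfl
        obtain ⟨e, hbe, hde⟩ := jbd
        obtain ⟨f, hcf, hdf⟩ := jcd
        obtain ⟨g, heg, hfg⟩ := IH d hd e f hde hdf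
        exact ⟨g, hbe.trans heg, hcf.trans hfg⟩
    intro b c hab hac
    rcases hab.cases_head with rfl | ⟨b₁, hab₁, hb₁b⟩
    · exact ⟨c, hac, Relation.ReflTransGen.refl⟩
    rcases hac.cases_head with rfl | ⟨c₁, hac₁, hc₁c⟩
    · exact ⟨b, Relation.ReflTransGen.refl, hab⟩
    obtain ⟨e, hbe, hce⟩ := loc (μ a b₁ c₁) b₁ c₁ hab₁ hac₁ rfl
    obtain ⟨f, hbf, hef⟩ := IH b₁ hab₁ b e hb₁b hbe
    obtain ⟨g, hcg, hfg⟩ := IH c₁ hac₁ c f hc₁c (hce.trans hef)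
    exact ⟨g, hbf.trans hfg, hcg⟩
  exact ⟨fun a b c hb hc => main a b c (Relation.ReflTransGen.single hb)
    (Relation.ReflTransGen.single hc), main⟩
end
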